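/- arXiv:2412.06467 — 3 statements merged into one kernel-verified Lean document; each statement's English description precedes it below -/
import Mathlib

section
/- Every finite simple graph possesses an admissible edge ordering, i.e., a total order ≻ on its edges such that for any two disjoint edges {a,b} ≻ {c,d}, either every edge incident to a is larger than {c,d}, or every edge incident to b is larger than {c,d}. -/
/-- `rank` represents a total (strict) order on the edges of `G` (larger rank = larger edge)
which is admissible: for any two disjoint edges `{a,b} ≻ {c,d}`, either all edges incident
to `a` or all edges incident to `b` are larger than `{c,d}`. -/
def AdmissibleRank {V : Type*} (G : SimpleGraph V) (rank : Sym2 V → ℕ) : Prop :=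
  Set.InjOn rank G.edgeSet ∧
  ∀ a b c d : V, G.Adj a b → G.Adj c d → ({a, b} : Set V) ∩ {c, d} = ∅ →
    rank s(c, d) < rank s(a, b) →
    ((∀ v : V, G.Adj a v → rank s(c, d) < rank s(a, v)) ∨
     (∀ v : V, G.Adj b v → rank s(c, d) < rank s(b, v)))

/-- every finite simple graph possesses an admissible edge ordering. -/
theorem stmt1 {V : Type*} [Fintype V] (G : SimpleGraph V) :
    ∃ rank : Sym2 V → ℕ, AdmissibleRank G rank := by
  classical
  set N := Fintype.card V with hN
  let f : V → ℕ := fun v => (Fintype.equivFin V v : ℕ)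
  have hf : Function.Injective f := fun a b h =>
    (Fintype.equivFin V).injective (Fin.ext h)
  have hfN : ∀ v, f v < N := fun v => (Fintype.equivFin V v).isLt
  have hcomm : ∀ a b : V,
      max (f a) (f b) * N + min (f a) (f b) = max (f b) (f a) * N + min (f b) (f a) := by
    intro a b; rw [max_comm, min_comm]
  refine ⟨Sym2.lift ⟨fun a b => max (f a) (f b) * N + min (f a) (f b), hcomm⟩, ?_, ?_⟩
  · -- injectivity on edge set
    intro e he e' he' h
    induction e using Sym2.ind with
    | _ a b =>
    induction e' using Sym2.ind with
    | _ c d =>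
    simp only [Sym2.lift_mk] at h
    have hNa := hfN a
    have hNb := hfN b
    have hNc := hfN c
    have hNd := hfN d
    have hmod : min (f a) (f b) = min (f c) (f d) := by
      have h2a : min (f a) (f b) < N := lt_of_le_of_lt (min_le_left _ _) hNa
      have h2c : min (f c) (f d) < N := lt_of_le_of_lt (min_le_left _ _) hNc
      have := congrArg (· % N) h
      simp only [Nat.mul_add_mod'] at this
      rwa [Nat.mod_eq_of_lt h2a, Nat.mod_eq_of_lt h2c] at this
    have hmax : max (f a) (f b) = max (f c) (f d) := by
      have hNpos : 0 < N := lt_of_le_of_lt (Nat.zero_le _) hNa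
      have : max (f a) (f b) * N = max (f c) (f d) * N := by omega
      exact Nat.eq_of_mul_eq_mul_right hNpos this
    have : (f a = f c ∧ f b = f d) ∨ (f a = f d ∧ f b = f c) := by omega
    rcases this with ⟨h1, h2⟩ | ⟨h1, h2⟩
    · rw [hf h1, hf h2]
    · rw [hf h1, hf h2, Sym2.eq_swap]
  · intro a b c d hab hcd hdisj hlt
    simp only [Sym2.lift_mk] at hlt ⊢
    have hNa := hfN a
    have hNb := hfN b
    have hNc := hfN c
    have hNd := hfN d
    have hac : a ≠ c := by
      intro h; subst h
      have : a ∈ ({a, b} : Set V) ∩ {a, d} := by simp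
      rw [hdisj] at this; exact this
    have had : a ≠ d := by
      intro h; subst h
      have : a ∈ ({a, b} : Set V) ∩ {c, a} := by simp
      rw [hdisj] at this; exact this
    have hbc : b ≠ c := by
      intro h; subst h
      have : b ∈ ({a, b} : Set V) ∩ {b, d} := by simp
      rw [hdisj] at this; exact this
    have hbd : b ≠ d := by
      intro h; subst h
      have : b ∈ ({a, b} : Set V) ∩ {c, b} := by simp
      rw [hdisj] at this; exact this
    have hfac : f a ≠ f c := fun h => hac (hf h)
    have hfad : f a ≠ f d := fun h => had (hf h)
    have hfbc : f b ≠ f c := fun h => hbc (hf h)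
    have hfbd : f b ≠ f d := fun h => hbd (hf h)
    have hmincd : min (f c) (f d) < N := lt_of_le_of_lt (min_le_left _ _) hNc
    have hmaxlt : max (f c) (f d) < max (f a) (f b) := by
      by_contra hcon
      have hle : max (f a) (f b) + 1 ≤ max (f c) (f d) := by omega
      have := Nat.mul_le_mul_right N hle
      rw [add_mul, one_mul] at this
      have hminab : min (f a) (f b) < N := lt_of_le_of_lt (min_le_left _ _) hNa
      omega
    have key : ∀ x v : V, max (f c) (f d) < f x →
        max (f c) (f d) * N + min (f c) (f d) < max (f x) (f v) * N + min (f x) (f v) := by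
      intro x v hx
      have h1 : (max (f c) (f d) + 1) * N ≤ max (f x) (f v) * N :=
        Nat.mul_le_mul_right N (le_trans hx (le_max_left _ _))
      calc max (f c) (f d) * N + min (f c) (f d)
          < (max (f c) (f d) + 1) * N := by nlinarith
        _ ≤ max (f x) (f v) * N := h1
        _ ≤ max (f x) (f v) * N + min (f x) (f v) := Nat.le_add_right _ _
    rcases le_total (f b) (f a) with hba | hba
    · left
      intro v hav
      exact key a v (by omega)
    · right
      intro v hbv
      exact key b v (by omega)
end

section
/- If G is a finite simple graph and some power I(G)^q of its edge ideal has a linear resolution (in particular, if I(G)^q has linear quotients) for some q ≥ 1, then G is gapfree. -/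
open MvPolynomial

/-- An ideal is generated by a subset of the variables. -/
def genByVars {K : Type*} [Field K] {σ : Type*} (J : Ideal (MvPolynomial σ K)) : Prop :=
  ∃ S : Set σ, J = Ideal.span ((fun i => (X i : MvPolynomial σ K)) '' S)

/-- An equigenerated monomial ideal has linear quotients: there is an ordering of a
minimal monomial generating system (an antichain of exponent vectors) such that each
successive colon ideal is generated by variables. -/
def HasLinearQuotients {K : Type*} [Field K] {σ : Type*} (I : Ideal (MvPolynomial σ K)) : Prop :=
  ∃ (r : ℕ) (d : Fin r → (σ →₀ ℕ)),
    (∀ i j : Fin r, i ≠ j → ¬ d i ≤ d j) ∧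
    Ideal.span (Set.range fun i => (monomial (d i) (1 : K))) = I ∧
    ∀ i : Fin r,
      genByVars (Submodule.colon
        (Ideal.span ((fun j => (monomial (d j) (1 : K))) '' {j | j < i}))
        (Ideal.span {(monomial (d i) (1 : K))}))

/-- A graph is gapfree if any two disjoint edges are joined by an edge meeting both. -/
def Gapfree {V : Type*} (G : SimpleGraph V) : Prop :=
  ∀ a b c d : V, G.Adj a b → G.Adj c d → ({a, b} : Set V) ∩ {c, d} = ∅ →
    ∃ u v : V, G.Adj u v ∧ (({u, v} : Set V) ∩ {a, b}).Nonempty ∧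
      (({u, v} : Set V) ∩ {c, d}).Nonempty

/-- The edge ideal of a graph. -/
noncomputable def edgeIdeal (K : Type*) [Field K] {V : Type*} (G : SimpleGraph V) :
    Ideal (MvPolynomial V K) :=
  Ideal.span {m | ∃ a b : V, G.Adj a b ∧ m = X a * X b}

/-!
Suppose `ab` and `ce` are disjoint edges with no edge meeting both. A monomial of `I(G)^q`
supported on a vertex set whose only edge is `ab` is divisible by `(ab)^q`; hence `(ab)^q` and
`(ce)^q` are minimal generators, and distinct since `q ≥ 1`. Say `(ce)^q` comes first in a
linear-quotient order. The colon ideal at `(ab)^q` contains `(ce)^q`, and being generated by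
variables it contains some `x_s` with `s ∈ {c, e}`. So an earlier generator divides
`x_s (ab)^q`; its support lies in `{s, a, b}`, which spans only the edge `ab`, so it is divisible
by `(ab)^q`, contradicting minimality of the generating system.
-/

open scoped Pointwise

theorem eq_nsmul_of_mem_nsmul_of_le {M : Type*} [AddCommMonoid M] [PartialOrder M]
    [CanonicallyOrderedAdd M] {S : Set M} {e v : M} (hS : ∀ s ∈ S, s ≤ e → s = v) :
    ∀ {q : ℕ} {w : M}, w ∈ q • S → w ≤ e → w = q • v
  | 0, w, hw, _ => by simpa using hw
  | q + 1, _, hw, hwe => by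
    rw [succ_nsmul] at hw
    obtain ⟨w, hw, s, hs, rfl⟩ := hw
    rw [eq_nsmul_of_mem_nsmul_of_le hS hw (le_self_add.trans hwe),
      hS s hs (le_add_self.trans hwe), succ_nsmul]

namespace MvPolynomial

variable {σ R : Type*} [CommSemiring R]

theorem monomial_one_mem_span_monomial_image [Nontrivial R] {S : Set (σ →₀ ℕ)}
    {e : σ →₀ ℕ} :
    monomial e (1 : R) ∈ Ideal.span ((monomial · 1) '' S) ↔ ∃ s ∈ S, s ≤ e := by
  classical
  simp [mem_ideal_span_monomial_image, support_monomial]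

theorem monomial_one_mem_span_X_image [Nontrivial R] {T : Set σ} {e : σ →₀ ℕ} :
    monomial e (1 : R) ∈ Ideal.span (X '' T) ↔ ∃ i ∈ T, e i ≠ 0 := by
  classical
  simp [mem_ideal_span_X_image, support_monomial]

theorem span_monomial_image_pow (S : Set (σ →₀ ℕ)) (q : ℕ) :
    Ideal.span ((monomial · (1 : R)) '' S) ^ q = Ideal.span ((monomial · 1) '' (q • S)) := by
  induction q with
  | zero => simp [Ideal.one_eq_top]
  | succ q ih =>
    rw [pow_succ, ih, Ideal.span_mul_span', succ_nsmul]
    congr 1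
    ext p
    simp [Set.mem_mul, Set.mem_add, monomial_mul]

theorem exists_eq_of_monomial_mem_of_minimal [Nontrivial R] {r : ℕ} {d : Fin r → σ →₀ ℕ}
    {I : Ideal (MvPolynomial σ R)} (hd : Ideal.span (Set.range fun i => monomial (d i) 1) = I)
    {v : σ →₀ ℕ} (hv : monomial v (1 : R) ∈ I)
    (hmin : ∀ u, monomial u (1 : R) ∈ I → u ≤ v → u = v) :
    ∃ j, d j = v := by
  rw [← hd, Set.range_comp' (monomial · 1) d, monomial_one_mem_span_monomial_image] at hv
  obtain ⟨_, ⟨j, rfl⟩, hjv⟩ := hv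
  exact ⟨j, hmin _ (hd ▸ Ideal.subset_span ⟨j, rfl⟩) hjv⟩

end MvPolynomial

theorem exists_le_single_add_of_genByVars {K σ : Type*} [Field K] {r : ℕ}
    {d : Fin r → σ →₀ ℕ} {i j : Fin r} (hji : j < i)
    (hcolon : genByVars (Submodule.colon
      (Ideal.span ((fun j => (monomial (d j) (1 : K))) '' {j | j < i}))
      (Ideal.span {(monomial (d i) (1 : K))}))) :
    ∃ s, d j s ≠ 0 ∧ ∃ k < i, d k ≤ Finsupp.single s 1 + d i := by
  obtain ⟨T, hT⟩ := hcolon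
  set J := Ideal.span ((fun j => (monomial (d j) (1 : K))) '' {j | j < i})
  have hjJ : monomial (d j) (1 : K) ∈ J := Ideal.subset_span ⟨j, hji, rfl⟩
  have hjcolon :
      monomial (d j) (1 : K) ∈ Submodule.colon J (Ideal.span {monomial (d i) (1 : K)}) :=
    Ideal.mem_colon_span_singleton.2 (J.mul_mem_right _ hjJ)
  obtain ⟨s, hsT, hs⟩ := monomial_one_mem_span_X_image.1 (hT ▸ hjcolon)
  have hscolon : X s ∈ Submodule.colon J (Ideal.span {monomial (d i) (1 : K)}) :=
    hT ▸ Ideal.subset_span ⟨s, hsT, rfl⟩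
  have hsi : monomial (Finsupp.single s 1 + d i) (1 : K) ∈ J := by
    simpa [X, monomial_mul] using Ideal.mem_colon_span_singleton.1 hscolon
  rw [show J = Ideal.span ((monomial · 1) '' (d '' {j | j < i})) by rw [Set.image_image],
    monomial_one_mem_span_monomial_image] at hsi
  obtain ⟨_, ⟨k, hki, rfl⟩, hk⟩ := hsi
  exact ⟨s, hs, k, hki, hk⟩

namespace SimpleGraph

variable {V : Type*} (G : SimpleGraph V)

def edgeExponents : Set (V →₀ ℕ) :=
  {w | ∃ a b, G.Adj a b ∧ w = Finsupp.single a 1 + Finsupp.single b 1}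

variable {G}

theorem edgeIdeal_eq_span_monomial (K : Type*) [Field K] :
    edgeIdeal K G = Ideal.span ((monomial · 1) '' G.edgeExponents) := by
  unfold edgeIdeal edgeExponents
  congr 1
  ext p
  simp [X, monomial_mul, eq_comm]

theorem monomial_mem_pow_edgeIdeal {K : Type*} [Field K] {q : ℕ} {e : V →₀ ℕ} :
    monomial e (1 : K) ∈ edgeIdeal K G ^ q ↔ ∃ w ∈ q • G.edgeExponents, w ≤ e := by
  rw [edgeIdeal_eq_span_monomial, span_monomial_image_pow, monomial_one_mem_span_monomial_image]

theorem single_add_single_eq_of_sym2_eq {a b x y : V} (h : s(x, y) = s(a, b)) :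
    (Finsupp.single x 1 + Finsupp.single y 1 : V →₀ ℕ) =
      Finsupp.single a 1 + Finsupp.single b 1 := by
  rcases Sym2.eq_iff.1 h with ⟨rfl, rfl⟩ | ⟨rfl, rfl⟩
  · rfl
  · exact add_comm _ _

theorem sym2_eq_of_mem_pair {a b x y : V} (hx : x ∈ ({a, b} : Set V))
    (hy : y ∈ ({a, b} : Set V)) (hxy : x ≠ y) : s(x, y) = s(a, b) := by
  aesop

theorem nsmul_le_of_monomial_mem_pow_edgeIdeal {K : Type*} [Field K] {W : Set V} {a b : V}
    (hW : ∀ x ∈ W, ∀ y ∈ W, G.Adj x y → s(x, y) = s(a, b)) {q : ℕ} {e : V →₀ ℕ}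
    (he : monomial e (1 : K) ∈ edgeIdeal K G ^ q) (hsupp : ↑e.support ⊆ W) :
    q • (Finsupp.single a 1 + Finsupp.single b 1) ≤ e := by
  obtain ⟨w, hw, hwe⟩ := monomial_mem_pow_edgeIdeal.1 he
  refine eq_nsmul_of_mem_nsmul_of_le ?_ hw hwe ▸ hwe
  rintro _ ⟨x, y, hxy, rfl⟩ hle
  have hmem : ∀ z ∈ ({x, y} : Set V), z ∈ W := by
    rintro z hz
    apply hsupp
    have := hle z
    rcases hz with rfl | rfl <;> simp at this ⊢ <;> omega
  exact single_add_single_eq_of_sym2_eq (hW x (hmem x (by simp)) y (hmem y (by simp)) hxy)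

theorem support_nsmul_single_add_single_subset (q : ℕ) (a b : V) :
    ↑(q • (Finsupp.single a 1 + Finsupp.single b 1) : V →₀ ℕ).support ⊆
      ({a, b} : Set V) := by
  intro z hz
  by_contra hzab
  simp_all

theorem exists_generator_eq_nsmul_edge {K : Type*} [Field K] {q r : ℕ}
    {d : Fin r → V →₀ ℕ}
    (hd : Ideal.span (Set.range fun i => monomial (d i) (1 : K)) = edgeIdeal K G ^ q)
    {a b : V} (hab : G.Adj a b) :
    ∃ j, d j = q • (Finsupp.single a 1 + Finsupp.single b 1) := by
  refine exists_eq_of_monomial_mem_of_minimal hd ?_ fun u hu hle => le_antisymm hle ?_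
  · rw [monomial_mem_pow_edgeIdeal]
    exact ⟨_, Set.nsmul_mem_nsmul (s := G.edgeExponents) ⟨a, b, hab, rfl⟩, le_rfl⟩
  · refine nsmul_le_of_monomial_mem_pow_edgeIdeal (W := {a, b}) ?_ hu
      ((Finset.coe_subset.2 (Finsupp.support_mono hle)).trans
        (support_nsmul_single_add_single_subset q a b))
    intro x hx y hy hxy
    exact sym2_eq_of_mem_pair hx hy hxy.ne

theorem not_lt_of_nsmul_edge_generators {K : Type*} [Field K] {q r : ℕ}
    {d : Fin r → V →₀ ℕ}
    (hanti : ∀ i j : Fin r, i ≠ j → ¬ d i ≤ d j)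
    (hd : Ideal.span (Set.range fun i => monomial (d i) (1 : K)) = edgeIdeal K G ^ q)
    {i j : Fin r}
    (hcolon : genByVars (Submodule.colon
      (Ideal.span ((fun j => (monomial (d j) (1 : K))) '' {j | j < i}))
      (Ideal.span {(monomial (d i) (1 : K))})))
    {a b c e : V} (hsep : ∀ x ∈ ({a, b} : Set V), ∀ y ∈ ({c, e} : Set V), ¬ G.Adj x y)
    (hi : d i = q • (Finsupp.single a 1 + Finsupp.single b 1))
    (hj : d j = q • (Finsupp.single c 1 + Finsupp.single e 1)) :
    ¬ j < i := by
  intro hji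
  obtain ⟨s, hs, k, hki, hk⟩ := exists_le_single_add_of_genByVars hji hcolon
  have hsce : s ∈ ({c, e} : Set V) :=
    support_nsmul_single_add_single_subset q c e (hj ▸ Finsupp.mem_support_iff.2 hs)
  have hkmem : monomial (d k) (1 : K) ∈ edgeIdeal K G ^ q := hd ▸ Ideal.subset_span ⟨k, rfl⟩
  have hksupp : ↑(d k).support ⊆ insert s ({a, b} : Set V) := by
    classical
    intro z hz
    rcases Finset.mem_union.1 (Finsupp.support_add (Finsupp.support_mono hk hz)) with hz | hz
    · exact .inl (by simpa using Finsupp.support_single_subset hz)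
    · exact .inr (support_nsmul_single_add_single_subset q a b (hi ▸ hz))
  have hW : ∀ x ∈ insert s ({a, b} : Set V), ∀ y ∈ insert s ({a, b} : Set V),
      G.Adj x y → s(x, y) = s(a, b) := by
    rintro x (rfl | hx) y (rfl | hy) hxy
    · exact (G.irrefl hxy).elim
    · exact absurd hxy.symm (hsep y hy x hsce)
    · exact absurd hxy (hsep x hx y hsce)
    · exact sym2_eq_of_mem_pair hx hy hxy.ne
  exact hanti i k hki.ne' (hi ▸ nsmul_le_of_monomial_mem_pow_edgeIdeal hW hkmem hksupp)

end SimpleGraph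

/-- if some power `I(G)^q` (`q ≥ 1`) of the edge ideal of a graph `G`
has linear quotients, then `G` is gapfree. -/
theorem stmt2 {K : Type*} [Field K] {V : Type*} (G : SimpleGraph V) (q : ℕ) (hq : 1 ≤ q)
    (h : HasLinearQuotients ((edgeIdeal K G) ^ q)) : Gapfree G := by
  obtain ⟨r, d, hanti, hd, hcolon⟩ := h
  intro a b c e hab hce hdisj
  by_contra hgap
  push Not at hgap
  have hsep : ∀ x ∈ ({a, b} : Set V), ∀ y ∈ ({c, e} : Set V), ¬ G.Adj x y := by
    intro x hx y hy hxy
    exact Set.eq_empty_iff_forall_notMem.1 (hgap x y hxy ⟨x, by simp, hx⟩) y ⟨by simp, hy⟩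
  obtain ⟨i, hi⟩ := G.exists_generator_eq_nsmul_edge hd hab
  obtain ⟨j, hj⟩ := G.exists_generator_eq_nsmul_edge hd hce
  have hij : i ≠ j := by
    rintro rfl
    have ha : a ∉ ({c, e} : Set V) := fun ha =>
      Set.eq_empty_iff_forall_notMem.1 hdisj a ⟨by simp, ha⟩
    have := congrArg (· a) (hi.symm.trans hj)
    simp only [Set.mem_insert_iff, Set.mem_singleton_iff, not_or] at ha
    simp [ha.1, ha.2] at this
    omega
  rcases hij.lt_or_gt with hij | hji
  · exact G.not_lt_of_nsmul_edge_generators hanti hd (hcolon j)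
      (fun x hx y hy hxy => hsep y hy x hx hxy.symm) hj hi hij
  · exact G.not_lt_of_nsmul_edge_generators hanti hd (hcolon i) hsep hi hj hji
end

section
/- Let G be a gapfree finite simple graph and x a vertex of G. Then the expansion G^{[x]} (obtained by adding a new vertex y adjacent to x and to all neighbors of x) is gapfree if and only if V(G) \ N_G[x] is an independent set of G. -/
/-- The expansion `G^[x]` of `G` at the vertex `x`: a new vertex (represented by `none`)
is joined to `x` and to every neighbor of `x`. -/
def expansion {V : Type*} (G : SimpleGraph V) (x : V) : SimpleGraph (Option V) :=
  SimpleGraph.fromRel (fun u v =>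
    (∃ a b : V, u = some a ∧ v = some b ∧ G.Adj a b) ∨
    (∃ b : V, u = none ∧ v = some b ∧ (b = x ∨ G.Adj x b)))

lemma exp_ss {V : Type*} (G : SimpleGraph V) (x : V) (a b : V) :
    (expansion G x).Adj (some a) (some b) ↔ G.Adj a b := by
  simp only [expansion, SimpleGraph.fromRel_adj]
  constructor
  · rintro ⟨hne, (⟨a',b',ha,hb,h⟩|⟨b',h,_⟩)|(⟨a',b',ha,hb,h⟩|⟨b',h,_⟩)⟩
    · cases ha; cases hb; exact h
    · exact absurd h (by simp)
    · cases ha; cases hb; exact h.symm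
    · exact absurd h (by simp)
  · intro h
    exact ⟨by simpa using h.ne, Or.inl (Or.inl ⟨a, b, rfl, rfl, h⟩)⟩

lemma exp_ns {V : Type*} (G : SimpleGraph V) (x : V) (b : V) :
    (expansion G x).Adj none (some b) ↔ (b = x ∨ G.Adj x b) := by
  simp only [expansion, SimpleGraph.fromRel_adj]
  constructor
  · rintro ⟨hne, (⟨a',b',ha,_,_⟩|⟨b',_,hb,h⟩)|(⟨a',b',_,hb,_⟩|⟨b',hb,_⟩)⟩
    · exact absurd ha (by simp)
    · cases Option.some.inj hb; exact h
    · exact absurd hb (by simp)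
    · exact absurd hb (by simp)
  · intro h
    exact ⟨by simp, Or.inl (Or.inr ⟨b, trivial, rfl, h⟩)⟩

/-- for a gapfree graph `G` and a vertex `x`, the expansion `G^[x]`
is gapfree iff `V(G) \ N_G[x]` is an independent set of `G`. -/
theorem stmt3 {V : Type*} (G : SimpleGraph V) (x : V) (hG : Gapfree G) :
    Gapfree (expansion G x) ↔
      ∀ u v : V, u ∉ insert x (G.neighborSet x) → v ∉ insert x (G.neighborSet x) →
        ¬ G.Adj u v := by
  constructor
  · intro h u v hu hv hadj
    simp only [Set.mem_insert_iff, SimpleGraph.mem_neighborSet, not_or] at hu hv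
    obtain ⟨hux, huadj⟩ := hu
    obtain ⟨hvx, hvadj⟩ := hv
    obtain ⟨p, q, hpq, h1, h2⟩ := h (some u) (some v) none (some x)
      ((exp_ss G x u v).2 hadj) ((exp_ns G x x).2 (Or.inl rfl))
      (by
        ext w; simp only [Set.mem_inter_iff, Set.mem_insert_iff, Set.mem_singleton_iff,
          Set.mem_empty_iff_false, iff_false, not_and, not_or]
        rintro (rfl|rfl) <;> constructor <;> simp [hux, hvx])
    obtain ⟨w1, hw1pq, hw1⟩ := h1
    obtain ⟨w2, hw2pq, hw2⟩ := h2
    -- w1 ∈ {some u, some v}, w2 ∈ {none, some x}, and both in {p,q}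
    simp only [Set.mem_inter_iff, Set.mem_insert_iff, Set.mem_singleton_iff] at hw1pq hw1 hw2pq hw2
    have hne : w1 ≠ w2 := by
      rcases hw1 with rfl|rfl <;> rcases hw2 with rfl|rfl <;> simp [hux, hvx]
    have hadj' : (expansion G x).Adj w1 w2 := by
      rcases hw1pq with rfl|rfl <;> rcases hw2pq with rfl|rfl
      · exact absurd rfl hne
      · exact hpq
      · exact hpq.symm
      · exact absurd rfl hne
    rcases hw1 with rfl|rfl <;> rcases hw2 with rfl|rfl
    · rcases (exp_ns G x u).1 hadj'.symm with rfl|h'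
      · exact hux rfl
      · exact huadj h'
    · exact huadj ((exp_ss G x u x).1 hadj').symm
    · rcases (exp_ns G x v).1 hadj'.symm with rfl|h'
      · exact hvx rfl
      · exact hvadj h'
    · exact hvadj ((exp_ss G x v x).1 hadj').symm
  · intro hind a b c d hab hcd hdisj
    -- helper: bridging when one side has the special vertex connection
    have key : ∀ (c' d' : V), G.Adj c' d' →
        ∃ w : V, (w = x ∨ G.Adj x w) ∧ (w = c' ∨ w = d') := by
      intro c' d' h'
      by_cases hc : c' = x ∨ G.Adj x c'
      · exact ⟨c', hc, Or.inl rfl⟩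
      by_cases hd : d' = x ∨ G.Adj x d'
      · exact ⟨d', hd, Or.inr rfl⟩
      · push_neg at hc hd
        exact absurd h' (hind c' d' (by simp [hc.1, hc.2]) (by simp [hd.1, hd.2]))
    have hdisj' : ∀ w, w ∈ ({a, b} : Set (Option V)) → w ∈ ({c, d} : Set (Option V)) → False := by
      intro w h1 h2
      have : w ∈ ({a,b} : Set (Option V)) ∩ {c,d} := ⟨h1, h2⟩
      rw [hdisj] at this; exact this
    match a, b, c, d with
    | some a', some b', some c', some d' =>
      have hab' : G.Adj a' b' := (exp_ss G x a' b').1 hab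
      have hcd' : G.Adj c' d' := (exp_ss G x c' d').1 hcd
      obtain ⟨u, v, huv, h1, h2⟩ := hG a' b' c' d' hab' hcd' (by
        ext w; simp only [Set.mem_inter_iff, Set.mem_insert_iff, Set.mem_singleton_iff,
          Set.mem_empty_iff_false, iff_false, not_and, not_or]
        rintro (rfl|rfl) <;> constructor <;> intro h' <;>
          exact hdisj' (some w) (by simp) (by simp [h']))
      refine ⟨some u, some v, (exp_ss G x u v).2 huv, ?_, ?_⟩
      · obtain ⟨w, hw1, hw2⟩ := h1
        exact ⟨some w, by simp only [Set.mem_inter_iff, Set.mem_insert_iff,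
          Set.mem_singleton_iff] at hw1 hw2 ⊢; rcases hw1 with rfl|rfl <;>
          rcases hw2 with rfl|rfl <;> simp⟩
      · obtain ⟨w, hw1, hw2⟩ := h2
        exact ⟨some w, by simp only [Set.mem_inter_iff, Set.mem_insert_iff,
          Set.mem_singleton_iff] at hw1 hw2 ⊢; rcases hw1 with rfl|rfl <;>
          rcases hw2 with rfl|rfl <;> simp⟩
    | none, some b', some c', some d' =>
      obtain ⟨w, hw, hw'⟩ := key c' d' ((exp_ss G x c' d').1 hcd)
      exact ⟨none, some w, (exp_ns G x w).2 hw, ⟨none, by simp⟩,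
        ⟨some w, by rcases hw' with rfl|rfl <;> simp⟩⟩
    | some b', none, some c', some d' =>
      obtain ⟨w, hw, hw'⟩ := key c' d' ((exp_ss G x c' d').1 hcd)
      exact ⟨none, some w, (exp_ns G x w).2 hw, ⟨none, by simp⟩,
        ⟨some w, by rcases hw' with rfl|rfl <;> simp⟩⟩
    | some c', some d', none, some b' =>
      obtain ⟨w, hw, hw'⟩ := key c' d' ((exp_ss G x c' d').1 hab)
      exact ⟨none, some w, (exp_ns G x w).2 hw,
        ⟨some w, by rcases hw' with rfl|rfl <;> simp⟩, ⟨none, by simp⟩⟩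
    | some c', some d', some b', none =>
      obtain ⟨w, hw, hw'⟩ := key c' d' ((exp_ss G x c' d').1 hab)
      exact ⟨none, some w, (exp_ns G x w).2 hw,
        ⟨some w, by rcases hw' with rfl|rfl <;> simp⟩, ⟨none, by simp⟩⟩
    | none, _, none, _ => exact (hdisj' none (by simp) (by simp)).elim
    | none, _, _, none => exact (hdisj' none (by simp) (by simp)).elim
    | _, none, none, _ => exact (hdisj' none (by simp) (by simp)).elim
    | _, none, _, none => exact (hdisj' none (by simp) (by simp)).elim
    | none, none, _, _ => exact absurd hab (by simp [expansion])
    | _, _, none, none => exact absurd hcd (by simp [expansion])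
end
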